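/- For every n×n symmetric real matrix M with Frobenius norm 1 all of whose k×k principal submatrices are PSD (2 ≤ k < n), the Frobenius distance from M to the PSD cone is at most (n - k)/(n + k - 2). -/

import Mathlib

open Matrix BigOperators Finset

noncomputable def frob {n : ℕ} (A : Matrix (Fin n) (Fin n) ℝ) : ℝ :=
  Real.sqrt (∑ i, ∑ j, (A i j)^2)

noncomputable def distPSD {n : ℕ} (M : Matrix (Fin n) (Fin n) ℝ) : ℝ :=
  sInf {d : ℝ | ∃ N : Matrix (Fin n) (Fin n) ℝ, N.PosSemidef ∧ d = frob (M - N)}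

def kPSD {n : ℕ} (k : ℕ) (M : Matrix (Fin n) (Fin n) ℝ) : Prop :=
  ∀ J : Finset (Fin n), J.card = k →
    (M.submatrix (fun i : {i // i ∈ J} => (i : Fin n))
      (fun i : {i // i ∈ J} => (i : Fin n))).PosSemidef

def kSparse {n : ℕ} (k : ℕ) (x : Fin n → ℝ) : Prop :=
  (Finset.univ.filter (fun i => x i ≠ 0)).card ≤ k


/-!
Averaging the quadratic forms of the `k × k` principal submatrices over all `k`-subsets counts
every diagonal entry `C(n-1, k-1)` times and every off-diagonal entry `C(n-2, k-2)` times, so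
`M + c • diag M` is PSD for `c = (n-k)/(k-1)`. The squared distance from `M` to the ray through
this matrix is `c² A (1 - A) / (1 + (2c + c²) A)` with `A = ‖diag M‖² ≤ 1`, which is at most
`(c / (c + 2))² = ((n-k)/(n+k-2))²` since the difference of the cleared denominators is
`c² (1 - (c + 2) A)²`.
-/

section Counting

variable {α : Type*} [Fintype α] [DecidableEq α]

theorem sum_powersetCard_sum_sum {R : Type*} [AddCommMonoid R] (k : ℕ) (g : α → α → R) :
    ∑ J ∈ univ.powersetCard k, ∑ i ∈ J, ∑ j ∈ J, g i j =
      ∑ i, ∑ j, #{J ∈ univ.powersetCard k | {i, j} ⊆ J} • g i j := by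
  simp only [← sum_const, sum_filter, insert_subset_iff, singleton_subset_iff, ite_and]
  calc _ = ∑ J ∈ univ.powersetCard k, ∑ i, ∑ j,
        if i ∈ J then if j ∈ J then g i j else 0 else 0 := by
        simp only [sum_ite_irrel, sum_const_zero, sum_ite_mem, univ_inter]
    _ = _ := by
        rw [sum_comm]
        exact sum_congr rfl fun i _ => sum_comm

theorem card_filter_powersetCard_pair_subset {k : ℕ} (hk : 2 ≤ k) (i j : α) :
    #{J ∈ univ.powersetCard k | {i, j} ⊆ J} =
      if i = j then (Fintype.card α - 1).choose (k - 1)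
      else (Fintype.card α - 2).choose (k - 2) := by
  rw [card_filter_powersetCard_subset _ _ _ (subset_univ _) ?_, card_univ]
  · split_ifs with hij <;> simp [hij]
  · by_cases hij : i = j <;> simp [hij] <;> omega

theorem sum_sum_ite_eq_mul {R : Type*} [CommRing R] (a b : R) (g : α → α → R) :
    ∑ i, ∑ j, (if i = j then a else b) * g i j =
      b * ∑ i, ∑ j, g i j + (a - b) * ∑ i, g i i := by
  have (i j : α) : (if i = j then a else b) = b + if i = j then a - b else 0 := by
    split_ifs <;> ring
  simp only [this, add_mul, ite_mul, zero_mul, sum_add_distrib, sum_ite_eq, mem_univ, if_true,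
    mul_sum]

end Counting

namespace kPSD

variable {n k : ℕ} {M : Matrix (Fin n) (Fin n) ℝ}

theorem sum_mul_mul_nonneg (h : kPSD k M) {J : Finset (Fin n)} (hJ : #J = k) (x : Fin n → ℝ) :
    0 ≤ ∑ i ∈ J, ∑ j ∈ J, x i * M i j * x j := by
  have := (h J hJ).dotProduct_mulVec_nonneg (fun i => x i)
  simp only [star_trivial, dotProduct, mulVec, submatrix_apply, mul_sum] at this
  simp_rw [← sum_coe_sort J, mul_assoc]
  exact this

theorem sum_mul_mul_add_diag_nonneg (h : kPSD k M) (hk : 2 ≤ k) (hkn : k ≤ n) (x : Fin n → ℝ) :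
    0 ≤ ∑ i, ∑ j, x i * M i j * x j + (n - k) / (k - 1) * ∑ i, x i * M i i * x i := by
  have hc₂ : (0 : ℝ) < (n - 2).choose (k - 2) := by exact_mod_cast Nat.choose_pos (by omega)
  have hk₁ : (0 : ℝ) < k - 1 := by
    have : (2 : ℝ) ≤ k := by exact_mod_cast hk
    linarith
  have hc : ((n - 1).choose (k - 1) - (n - 2).choose (k - 2) : ℝ) =
      (n - 2).choose (k - 2) * ((n - k) / (k - 1)) := by
    have := Nat.add_one_mul_choose_eq (n - 2) (k - 2)
    rw [show n - 2 + 1 = n - 1 by omega, show k - 2 + 1 = k - 1 by omega] at this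
    have hr := congrArg (Nat.cast : ℕ → ℝ) this
    push_cast [Nat.cast_sub (show 1 ≤ n by omega), Nat.cast_sub (show 1 ≤ k by omega)] at hr
    rw [eq_comm, mul_div_assoc', div_eq_iff hk₁.ne']
    linear_combination hr
  have hsum := sum_nonneg fun J hJ => h.sum_mul_mul_nonneg (mem_powersetCard_univ.mp hJ) x
  simp only [sum_powersetCard_sum_sum, card_filter_powersetCard_pair_subset hk, Fintype.card_fin,
    nsmul_eq_mul, Nat.cast_ite, sum_sum_ite_eq_mul, hc] at hsum
  rw [mul_assoc, ← mul_add] at hsum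
  exact nonneg_of_mul_nonneg_right hsum hc₂

theorem posSemidef_add_smul_diagonal (h : kPSD k M) (hM : M.IsSymm) (hk : 2 ≤ k) (hkn : k ≤ n) :
    (M + (((n : ℝ) - k) / (k - 1)) • diagonal M.diag).PosSemidef := by
  refine .of_dotProduct_mulVec_nonneg ?_ fun x => ?_
  · exact isHermitian_iff_isSymm.mpr (hM.add ((isSymm_diagonal _).smul _))
  · refine (h.sum_mul_mul_add_diag_nonneg hk hkn x).trans_eq ?_
    simp only [star_trivial, add_mulVec, smul_mulVec, dotProduct_add, dotProduct_smul, smul_eq_mul]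
    simp only [dotProduct, mulVec_diagonal, diag_apply]
    simp only [dotProduct, mulVec, mul_sum, mul_assoc]

end kPSD

section Frobenius

variable {n : ℕ}

theorem distPSD_le_frob_sub (M : Matrix (Fin n) (Fin n) ℝ) {N : Matrix (Fin n) (Fin n) ℝ}
    (hN : N.PosSemidef) : distPSD M ≤ frob (M - N) :=
  csInf_le ⟨0, by rintro _ ⟨_, _, rfl⟩; exact Real.sqrt_nonneg _⟩ ⟨N, hN, rfl⟩

theorem sum_sq_smul_add_smul_diagonal (M : Matrix (Fin n) (Fin n) ℝ) (a b : ℝ) :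
    ∑ i, ∑ j, ((a • M + b • diagonal M.diag) i j) ^ 2 =
      a ^ 2 * ∑ i, ∑ j, M i j ^ 2 + ((a + b) ^ 2 - a ^ 2) * ∑ i, M i i ^ 2 := by
  rw [← sum_sum_ite_eq_mul]
  refine sum_congr rfl fun i _ => sum_congr rfl fun j _ => ?_
  by_cases hij : i = j
  · subst hij; simp; ring
  · simp [hij]; ring

theorem sum_diag_sq_le (M : Matrix (Fin n) (Fin n) ℝ) :
    ∑ i, M i i ^ 2 ≤ ∑ i, ∑ j, M i j ^ 2 :=
  sum_le_sum fun i _ => single_le_sum (fun j _ => sq_nonneg (M i j)) (mem_univ i)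

theorem exists_frob_sub_smul_add_smul_diagonal_le {M : Matrix (Fin n) (Fin n) ℝ}
    (hM : frob M = 1) {c : ℝ} (hc : 0 ≤ c) :
    ∃ θ : ℝ, 0 ≤ θ ∧ frob (M - θ • (M + c • diagonal M.diag)) ≤ c / (c + 2) := by
  have hS : ∑ i, ∑ j, M i j ^ 2 = 1 := Real.sqrt_eq_one.mp hM
  set A := ∑ i, M i i ^ 2
  have hA₀ : 0 ≤ A := sum_nonneg fun i _ => sq_nonneg _
  have hA₁ : A ≤ 1 := hS ▸ sum_diag_sq_le M
  have hD : 0 < 1 + (2 * c + c ^ 2) * A := by positivity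
  -- `θ • P` is the orthogonal projection of `M` onto the ray through `P = M + c • diagonal M.diag`
  set θ := (1 + c * A) / (1 + (2 * c + c ^ 2) * A)
  refine ⟨θ, by positivity, ?_⟩
  have hsub : M - θ • (M + c • diagonal M.diag) = (1 - θ) • M + (-(θ * c)) • diagonal M.diag := by
    module
  rw [frob, hsub, sum_sq_smul_add_smul_diagonal, hS, Real.sqrt_le_left (by positivity)]
  have hval : (1 - θ) ^ 2 * 1 + ((1 - θ + -(θ * c)) ^ 2 - (1 - θ) ^ 2) * A =
      c ^ 2 * (A * (1 - A)) / (1 + (2 * c + c ^ 2) * A) := by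
    simp only [θ]
    field_simp
    ring
  rw [hval, div_pow, div_le_div_iff₀ hD (by positivity)]
  have hgap : c ^ 2 * (1 + (2 * c + c ^ 2) * A) - c ^ 2 * (A * (1 - A)) * (c + 2) ^ 2 =
      (c * (1 - (c + 2) * A)) ^ 2 := by
    ring
  linarith [sq_nonneg (c * (1 - (c + 2) * A))]

end Frobenius

theorem stmt4 (n k : ℕ) (hk : 2 ≤ k) (hkn : k < n)
    (M : Matrix (Fin n) (Fin n) ℝ) (hM : M.IsSymm) (hnorm : frob M = 1)
    (h : kPSD k M) :
    distPSD M ≤ ((n : ℝ) - k) / ((n : ℝ) + k - 2) := by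
  have hk₁ : (1 : ℝ) < k := by exact_mod_cast hk
  have hkn' : (k : ℝ) < n := by exact_mod_cast hkn
  set c := ((n : ℝ) - k) / (k - 1)
  have hc : 0 ≤ c := div_nonneg (by linarith) (by linarith)
  obtain ⟨θ, hθ, hdist⟩ := exists_frob_sub_smul_add_smul_diagonal_le hnorm hc
  calc distPSD M ≤ frob (M - θ • (M + c • diagonal M.diag)) :=
        distPSD_le_frob_sub M ((h.posSemidef_add_smul_diagonal hM hk hkn.le).smul hθ)
    _ ≤ c / (c + 2) := hdist
    _ = ((n : ℝ) - k) / ((n : ℝ) + k - 2) := by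
        have : (k : ℝ) - 1 ≠ 0 := by linarith
        rw [div_add' _ _ _ this, div_div_div_cancel_right₀ this]
        ring_nf
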